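/- Let R₀ be the memory of a consumer that is a model of a pattern, i.e., H(X | P, R₀) = H(X | R₀) where X is the consumed word of length k and P the past. Then the entropy change of consuming k steps and writing k i.i.d. default symbols satisfies ΔH = k·(H(Y_dflt) − h) + ζ, where h·k = H(X | P) and ζ = I(X ; R₀ | P) ≥ 0; in particular ΔH ≥ k·(H(Y_dflt) − h). -/
import Mathlib


open scoped Classical

noncomputable section

variable {Ω : Type*} [Fintype Ω]

/-- Probability of an event under a pmf `p` on a finite sample space. -/
def prob (p : Ω → ℝ) (E : Ω → Prop) : ℝ := ∑ ω, if E ω then p ω else 0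

/-- `p` is a probability mass function. -/
structure IsPMF (p : Ω → ℝ) : Prop where
  nonneg : ∀ ω, 0 ≤ p ω
  sum_one : ∑ ω, p ω = 1

/-- Shannon entropy of the random variable `X`. -/
def H {α : Type*} [Fintype α] (p : Ω → ℝ) (X : Ω → α) : ℝ :=
  - ∑ a : α, prob p (fun ω => X ω = a) * Real.log (prob p (fun ω => X ω = a))

/-- Joint Shannon entropy of `X` and `Y`. -/
def H2 {α β : Type*} [Fintype α] [Fintype β] (p : Ω → ℝ) (X : Ω → α) (Y : Ω → β) : ℝ :=
  H p (fun ω => (X ω, Y ω))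

/-- Conditional Shannon entropy `H(X | Y)`. -/
def condH {α β : Type*} [Fintype α] [Fintype β] (p : Ω → ℝ) (X : Ω → α) (Y : Ω → β) : ℝ :=
  H2 p X Y - H p Y

/-- Mutual information `I(X ; Y)`. -/
def mutInfo {α β : Type*} [Fintype α] [Fintype β] (p : Ω → ℝ) (X : Ω → α) (Y : Ω → β) : ℝ :=
  H p X + H p Y - H2 p X Y

/-- Conditional mutual information `I(X ; Y | W)`. -/
def cmi {α β γ : Type*} [Fintype α] [Fintype β] [Fintype γ]
    (p : Ω → ℝ) (X : Ω → α) (Y : Ω → β) (W : Ω → γ) : ℝ :=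
  condH p X W - condH p X (fun ω => (W ω, Y ω))

/-- Trivariate conditional mutual information `I(X ; Y ; Z | W)`. -/
def tri {α β γ δ : Type*} [Fintype α] [Fintype β] [Fintype γ] [Fintype δ]
    (p : Ω → ℝ) (X : Ω → α) (Y : Ω → β) (Z : Ω → γ) (W : Ω → δ) : ℝ :=
  cmi p X Y W - cmi p X Y (fun ω => (Z ω, W ω))

/-- `X → Y → Z` is a Markov chain: `X` and `Z` are conditionally independent given `Y`. -/
def MarkovChain {α β γ : Type*} (p : Ω → ℝ) (X : Ω → α) (Y : Ω → β) (Z : Ω → γ) : Prop :=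
  ∀ x y z,
    prob p (fun ω => X ω = x ∧ Y ω = y ∧ Z ω = z) * prob p (fun ω => Y ω = y) =
    prob p (fun ω => X ω = x ∧ Y ω = y) * prob p (fun ω => Y ω = y ∧ Z ω = z)

section AuxProof

lemma prob_nonneg' (p : Ω → ℝ) (hp : IsPMF p) (E : Ω → Prop) : 0 ≤ prob p E := by
  refine Finset.sum_nonneg fun ω _ => ?_
  by_cases h : E ω <;> simp [h, hp.nonneg ω]

lemma prob_congr' (p : Ω → ℝ) {E F : Ω → Prop} (h : ∀ ω, E ω ↔ F ω) :
    prob p E = prob p F := by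
  unfold prob
  exact Finset.sum_congr rfl fun ω _ => by simp [h ω]

lemma prob_fiber' {ι : Type*} [Fintype ι] (p : Ω → ℝ) (F : Ω → ι) (E : Ω → Prop) :
    ∑ i, prob p (fun ω => F ω = i ∧ E ω) = prob p E := by
  unfold prob
  rw [Finset.sum_comm]
  refine Finset.sum_congr rfl fun ω _ => ?_
  by_cases hE : E ω
  · simp [hE]
  · simp [hE]

lemma prob_total' {ι : Type*} [Fintype ι] (p : Ω → ℝ) (hp : IsPMF p) (F : Ω → ι) :
    ∑ i, prob p (fun ω => F ω = i) = 1 := by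
  have h := prob_fiber' p F (fun _ => True)
  have h2 : prob p (fun _ => True) = 1 := by
    unfold prob; simpa using hp.sum_one
  rw [h2] at h
  rw [← h]
  exact Finset.sum_congr rfl fun i _ => prob_congr' p (fun ω => by simp)

lemma H_map' {ι κ : Type*} [Fintype ι] [Fintype κ] (p : Ω → ℝ) (g : Ω → ι) (j : ι ≃ κ) :
    H p (fun ω => j (g ω)) = H p g := by
  unfold H
  congr 1
  rw [← Equiv.sum_comp j]
  refine Finset.sum_congr rfl fun i _ => ?_
  have : prob p (fun ω => j (g ω) = j i) = prob p (fun ω => g ω = i) :=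
    prob_congr' p (fun ω => by simp [j.injective.eq_iff])
  rw [this]

lemma H2_comm' {α β : Type*} [Fintype α] [Fintype β] (p : Ω → ℝ) (A : Ω → α) (B : Ω → β) :
    H2 p A B = H2 p B A := by
  have := H_map' p (fun ω => (A ω, B ω)) (Equiv.prodComm α β)
  unfold H2
  simpa using this.symm

lemma cmi_nonneg' {α β γ : Type*} [Fintype α] [Fintype β] [Fintype γ]
    (p : Ω → ℝ) (hp : IsPMF p) (X : Ω → α) (Y : Ω → β) (W : Ω → γ) :
    0 ≤ cmi p X Y W := by
  set q : α → β → γ → ℝ := fun x y w => prob p (fun ω => X ω = x ∧ Y ω = y ∧ W ω = w) with hqdef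
  set a : α → γ → ℝ := fun x w => ∑ y, q x y w with hadef
  set b : β → γ → ℝ := fun y w => ∑ x, q x y w with hbdef
  set c : γ → ℝ := fun w => ∑ x, ∑ y, q x y w with hcdef
  have hq0 : ∀ x y w, 0 ≤ q x y w := fun x y w => prob_nonneg' p hp _
  have ha0 : ∀ x w, 0 ≤ a x w := fun x w => Finset.sum_nonneg fun y _ => hq0 x y w
  have hb0 : ∀ y w, 0 ≤ b y w := fun y w => Finset.sum_nonneg fun x _ => hq0 x y w
  have hc0 : ∀ w, 0 ≤ c w := fun w => Finset.sum_nonneg fun x _ => ha0 x w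
  have hqa : ∀ x y w, q x y w ≤ a x w := fun x y w =>
    Finset.single_le_sum (fun y _ => hq0 x y w) (Finset.mem_univ y)
  have hqb : ∀ x y w, q x y w ≤ b y w := fun x y w =>
    Finset.single_le_sum (fun x _ => hq0 x y w) (Finset.mem_univ x)
  have hac : ∀ x w, a x w ≤ c w := fun x w =>
    Finset.single_le_sum (fun x _ => ha0 x w) (Finset.mem_univ x)
  -- marginal identifications
  have hPa : ∀ x w, prob p (fun ω => (X ω, W ω) = (x, w)) = a x w := by
    intro x w
    have h1 : ∀ y, q x y w = prob p (fun ω => Y ω = y ∧ (X ω = x ∧ W ω = w)) := by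
      intro y; exact prob_congr' p (fun ω => by tauto)
    rw [hadef]
    simp only [h1]
    rw [prob_fiber' p Y (fun ω => X ω = x ∧ W ω = w)]
    exact (prob_congr' p (fun ω => by simp [Prod.ext_iff])).symm
  have hPb : ∀ y w, prob p (fun ω => (W ω, Y ω) = (w, y)) = b y w := by
    intro y w
    have h1 : ∀ x, q x y w = prob p (fun ω => X ω = x ∧ (Y ω = y ∧ W ω = w)) := by
      intro x; exact prob_congr' p (fun ω => by tauto)
    rw [hbdef]
    simp only [h1]
    rw [prob_fiber' p X (fun ω => Y ω = y ∧ W ω = w)]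
    exact (prob_congr' p (fun ω => by simp [Prod.ext_iff]; tauto)).symm
  have hPc : ∀ w, prob p (fun ω => W ω = w) = c w := by
    intro w
    have h1 : ∀ x y, q x y w = prob p (fun ω => Y ω = y ∧ (X ω = x ∧ W ω = w)) := by
      intro x y; exact prob_congr' p (fun ω => by tauto)
    have h2 : ∀ x, ∑ y, q x y w = prob p (fun ω => X ω = x ∧ W ω = w) := by
      intro x
      simp only [h1]
      exact prob_fiber' p Y (fun ω => X ω = x ∧ W ω = w)
    rw [hcdef]
    simp only [h2]
    exact (prob_fiber' p X (fun ω => W ω = w)).symm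
  have hPq : ∀ x y w, prob p (fun ω => (X ω, (W ω, Y ω)) = (x, (w, y))) = q x y w := by
    intro x y w
    exact prob_congr' p (fun ω => by simp [Prod.ext_iff]; tauto)
  have hcsum : ∑ w, c w = 1 := by
    rw [← prob_total' p hp W]
    exact Finset.sum_congr rfl fun w _ => (hPc w).symm
  -- entropies as sums over q, a, b, c
  have e1 : H p W = -∑ w, c w * Real.log (c w) := by
    simp only [H]; congr 1
    exact Finset.sum_congr rfl fun w _ => by rw [hPc]
  have e2 : H2 p X W = -∑ w, ∑ x, a x w * Real.log (a x w) := by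
    simp only [H2, H]; congr 1
    rw [Fintype.sum_prod_type, Finset.sum_comm]
    exact Finset.sum_congr rfl fun w _ => Finset.sum_congr rfl fun x _ => by rw [hPa]
  have e3 : H p (fun ω => (W ω, Y ω)) = -∑ w, ∑ y, b y w * Real.log (b y w) := by
    simp only [H]; congr 1
    rw [Fintype.sum_prod_type]
    exact Finset.sum_congr rfl fun w _ => Finset.sum_congr rfl fun y _ => by rw [hPb]
  have e4 : H2 p X (fun ω => (W ω, Y ω)) = -∑ w, ∑ x, ∑ y, q x y w * Real.log (q x y w) := by
    simp only [H2, H]; congr 1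
    rw [Fintype.sum_prod_type]
    have inner : ∀ x, (∑ pr : γ × β,
        prob p (fun ω => (X ω, (W ω, Y ω)) = (x, pr)) *
          Real.log (prob p (fun ω => (X ω, (W ω, Y ω)) = (x, pr)))) =
        ∑ w, ∑ y, q x y w * Real.log (q x y w) := by
      intro x
      rw [Fintype.sum_prod_type]
      exact Finset.sum_congr rfl fun w _ => Finset.sum_congr rfl fun y _ => by rw [hPq]
    simp only [inner]
    rw [Finset.sum_comm]
  -- expand marginal-entropy sums over the triple index
  have f1 : ∑ w, c w * Real.log (c w) = ∑ w, ∑ x, ∑ y, q x y w * Real.log (c w) := by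
    refine Finset.sum_congr rfl fun w _ => ?_
    show (∑ x, ∑ y, q x y w) * Real.log (c w) = _
    rw [Finset.sum_mul]
    exact Finset.sum_congr rfl fun x _ => by rw [Finset.sum_mul]
  have f2 : ∑ w, ∑ x, a x w * Real.log (a x w) =
      ∑ w, ∑ x, ∑ y, q x y w * Real.log (a x w) := by
    refine Finset.sum_congr rfl fun w _ => Finset.sum_congr rfl fun x _ => ?_
    show (∑ y, q x y w) * Real.log (a x w) = _
    rw [Finset.sum_mul]
  have f3 : ∑ w, ∑ y, b y w * Real.log (b y w) =
      ∑ w, ∑ x, ∑ y, q x y w * Real.log (b y w) := by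
    refine Finset.sum_congr rfl fun w _ => ?_
    rw [Finset.sum_comm]
    refine Finset.sum_congr rfl fun y _ => ?_
    show (∑ x, q x y w) * Real.log (b y w) = _
    rw [Finset.sum_mul]
  -- the key identity
  have key : cmi p X Y W = ∑ w, ∑ x, ∑ y, q x y w *
      (Real.log (q x y w) + Real.log (c w) - Real.log (a x w) - Real.log (b y w)) := by
    have hcmi : cmi p X Y W = (H2 p X W - H p W) -
        (H2 p X (fun ω => (W ω, Y ω)) - H p (fun ω => (W ω, Y ω))) := rfl
    rw [hcmi, e1, e2, e3, e4, f1, f2, f3]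
    simp only [mul_add, mul_sub, Finset.sum_add_distrib, Finset.sum_sub_distrib]
    ring
  -- per-term lower bound
  have hterm : ∀ w x y, q x y w - a x w * b y w / c w ≤ q x y w *
      (Real.log (q x y w) + Real.log (c w) - Real.log (a x w) - Real.log (b y w)) := by
    intro w x y
    rcases eq_or_lt_of_le (hq0 x y w) with hq | hq
    · rw [← hq]
      have : (0:ℝ) ≤ a x w * b y w / c w :=
        div_nonneg (mul_nonneg (ha0 x w) (hb0 y w)) (hc0 w)
      simpa using this
    · have hap : 0 < a x w := lt_of_lt_of_le hq (hqa x y w)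
      have hbp : 0 < b y w := lt_of_lt_of_le hq (hqb x y w)
      have hcp : 0 < c w := lt_of_lt_of_le hap (hac x w)
      have hx : 0 < a x w * b y w / (q x y w * c w) := by positivity
      have hlog := Real.log_le_sub_one_of_pos hx
      rw [Real.log_div (by positivity) (by positivity),
        Real.log_mul hap.ne' hbp.ne', Real.log_mul hq.ne' hcp.ne'] at hlog
      have hmul : q x y w * (a x w * b y w / (q x y w * c w)) = a x w * b y w / c w := by
        field_simp
      have h2 : 1 - a x w * b y w / (q x y w * c w) ≤
          Real.log (q x y w) + Real.log (c w) - Real.log (a x w) - Real.log (b y w) := by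
        linarith
      have h3 := mul_le_mul_of_nonneg_left h2 (le_of_lt hq)
      rw [mul_sub, mul_one, hmul] at h3
      exact h3
  -- per-w sum bound for the correction term
  have hsumw : ∀ w, ∑ x, ∑ y, a x w * b y w / c w ≤ c w := by
    intro w
    by_cases hc : c w = 0
    · have hz : ∀ x, a x w = 0 := fun x => le_antisymm (hc ▸ hac x w) (ha0 x w)
      simp [hz, hc]
    · have hcp : 0 < c w := (hc0 w).lt_of_ne (Ne.symm hc)
      have hsa : ∑ x, a x w = c w := rfl
      have hsb : ∑ y, b y w = c w := by
        show ∑ y, ∑ x, q x y w = ∑ x, ∑ y, q x y w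
        exact Finset.sum_comm
      have : ∑ x, ∑ y, a x w * b y w / c w = (∑ x, a x w) * (∑ y, b y w) / c w := by
        rw [Finset.sum_mul_sum]
        simp only [Finset.sum_div]
      rw [this, hsa, hsb]
      have : c w * c w / c w = c w := by field_simp
      rw [this]
  -- assemble
  have A : ∑ w, ∑ x, ∑ y, q x y w = 1 := hcsum
  have B : ∑ w, ∑ x, ∑ y, a x w * b y w / c w ≤ 1 := by
    rw [← hcsum]
    exact Finset.sum_le_sum fun w _ => hsumw w
  have D : ∑ w, ∑ x, ∑ y, (q x y w - a x w * b y w / c w) ≤ ∑ w, ∑ x, ∑ y, q x y w *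
      (Real.log (q x y w) + Real.log (c w) - Real.log (a x w) - Real.log (b y w)) :=
    Finset.sum_le_sum fun w _ => Finset.sum_le_sum fun x _ =>
      Finset.sum_le_sum fun y _ => hterm w x y
  have E : ∑ w, ∑ x, ∑ y, (q x y w - a x w * b y w / c w) =
      (∑ w, ∑ x, ∑ y, q x y w) - ∑ w, ∑ x, ∑ y, a x w * b y w / c w := by
    simp only [Finset.sum_sub_distrib]
  rw [key]
  rw [E, A] at D
  linarith

end AuxProof

/-- the entropy change of a consumer that is a model of its input pattern
is `ΔH = k·(H(Y_dflt) − h) + ζ` with `ζ = I(X ; R₀ | P) ≥ 0`. -/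
theorem consumer_entropy_change
    {α β γ δ : Type*} [Fintype α] [Fintype β] [Fintype γ] [Fintype δ]
    (p : Ω → ℝ) (hp : IsPMF p)
    (X : Ω → α) (P : Ω → β) (R0 : Ω → γ) (Rk : Ω → γ) (D : Ω → δ)
    (k : ℕ) (h HY : ℝ)
    (hModel : condH p X (fun ω => (P ω, R0 ω)) = condH p X R0)
    (hEntRate : condH p X P = (k : ℝ) * h)
    (hOut : H p D = (k : ℝ) * HY)
    (hIndep : H2 p Rk D = H p Rk + H p D)
    (hStat : H p Rk = H p R0) :
    H2 p Rk D - H2 p R0 X = (k : ℝ) * (HY - h) + cmi p X R0 P ∧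
    0 ≤ cmi p X R0 P ∧
    (k : ℝ) * (HY - h) ≤ H2 p Rk D - H2 p R0 X := by
  have hcmi : cmi p X R0 P = condH p X P - condH p X (fun ω => (P ω, R0 ω)) := rfl
  have hXR0 : condH p X R0 = (k : ℝ) * h - cmi p X R0 P := by
    rw [hcmi, hModel, hEntRate]; ring
  have hsw : H2 p R0 X = H2 p X R0 := H2_comm' p R0 X
  have hXR0' : H2 p X R0 = H p R0 + condH p X R0 := by
    unfold condH; ring
  have hzeta : 0 ≤ cmi p X R0 P := cmi_nonneg' p hp X R0 P
  have main : H2 p Rk D - H2 p R0 X = (k : ℝ) * (HY - h) + cmi p X R0 P := by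
    rw [hsw, hXR0', hXR0, hIndep, hStat, hOut]; ring
  exact ⟨main, hzeta, by rw [main]; linarith⟩
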